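/- arXiv:2206.10394 — 6 statements merged into one kernel-verified Lean document; each statement's English description precedes it below -/
import Mathlib

section
/- For every real number κ with κ > 1, the function f_κ is not monotone increasing on (0,∞): there exist real numbers x, y with 0 < x < y and f_κ(y) < f_κ(x). Consequently f_κ is not operator monotone (it already fails on 1×1 matrices). -/
/-!
On `(0, 1)` we have `f_κ(x) = (κ/2)(1 - x)(1 + x^κ)/(1 - x^κ)`, which tends to `κ/2` as `x → 0⁺`.
For `κ > 1`, `x^κ = o(x)` at `0`, so some small `y` satisfies `2y^κ < y`, and this forces
`f_κ(y) < κ/2`. Every `x > 0` close enough to `0` then has `f_κ(x) > f_κ(y)`.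
-/

/-- The function `f_κ(x) = (κ/2)·(x−1)(x^κ+1)/(x^κ−1)` for `x ≠ 1`, with `f_κ(1) = 1`. -/
noncomputable def fKappa (κ : ℝ) : ℝ → ℝ := fun x =>
  if x = 1 then 1 else κ / 2 * ((x - 1) * (x ^ κ + 1)) / (x ^ κ - 1)

open Filter Topology Set

lemma fKappa_eq_of_lt_one {κ x : ℝ} (hκ : 0 < κ) (hx0 : 0 ≤ x) (hx1 : x < 1) :
    fKappa κ x = κ / 2 * ((1 - x) * (1 + x ^ κ)) / (1 - x ^ κ) := by
  have hxκ : x ^ κ < 1 := Real.rpow_lt_one hx0 hx1 hκ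
  rw [fKappa, if_neg hx1.ne, div_eq_div_iff (by linarith) (by linarith)]
  ring

lemma tendsto_fKappa_nhdsGT_zero {κ : ℝ} (hκ : 0 < κ) :
    Tendsto (fKappa κ) (𝓝[>] 0) (𝓝 (κ / 2)) := by
  have hpow : ContinuousAt (fun x : ℝ => x ^ κ) 0 :=
    Real.continuousAt_rpow_const 0 κ (Or.inr hκ.le)
  have hcont : ContinuousAt (fun x : ℝ => κ / 2 * ((1 - x) * (1 + x ^ κ)) / (1 - x ^ κ)) 0 :=
    (continuousAt_const.mul ((continuousAt_const.sub continuousAt_id).mul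
      (continuousAt_const.add hpow))).div (continuousAt_const.sub hpow)
      (by simp [Real.zero_rpow hκ.ne'])
  have hval : κ / 2 * ((1 - 0) * (1 + (0 : ℝ) ^ κ)) / (1 - 0 ^ κ) = κ / 2 := by
    simp [Real.zero_rpow hκ.ne']
  refine (hval ▸ hcont.tendsto).mono_left nhdsWithin_le_nhds |>.congr' ?_
  filter_upwards [Ioo_mem_nhdsGT one_pos] with x hx
  exact (fKappa_eq_of_lt_one hκ hx.1.le hx.2).symm

lemma fKappa_lt_half_of_two_mul_rpow_lt {κ y : ℝ} (hκ : 0 < κ) (hy0 : 0 < y) (hy1 : y < 1)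
    (hyκ : 2 * y ^ κ < y) : fKappa κ y < κ / 2 := by
  have hyκ1 : y ^ κ < 1 := Real.rpow_lt_one hy0.le hy1 hκ
  have hyκ0 : 0 < y ^ κ := Real.rpow_pos_of_pos hy0 κ
  rw [fKappa_eq_of_lt_one hκ hy0.le hy1, div_lt_iff₀ (by linarith),
    mul_lt_mul_iff_right₀ (by linarith)]
  nlinarith

lemma eventually_two_mul_rpow_lt {κ : ℝ} (hκ : 1 < κ) :
    ∀ᶠ y in 𝓝[>] (0 : ℝ), 2 * y ^ κ < y := by
  have hpow : Tendsto (fun y : ℝ => y ^ (κ - 1)) (𝓝[>] 0) (𝓝 0) := by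
    have := (Real.continuousAt_rpow_const 0 (κ - 1) (Or.inr (by linarith))).tendsto
    rw [Real.zero_rpow (by linarith)] at this
    exact this.mono_left nhdsWithin_le_nhds
  filter_upwards [hpow.eventually (gt_mem_nhds (by norm_num : (0 : ℝ) < 1 / 2)),
    self_mem_nhdsWithin] with y hy (hy0 : 0 < y)
  have hsplit : y ^ κ = y ^ (κ - 1) * y := by
    rw [← Real.rpow_add_one hy0.ne']; norm_num
  nlinarith

/-- For `κ > 1`, the function `f_κ` is not monotone increasing on `(0,∞)`: there are
`0 < x < y` with `f_κ(y) < f_κ(x)`. -/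
theorem fKappa_not_monotone (κ : ℝ) (hκ : 1 < κ) :
    ∃ x y : ℝ, 0 < x ∧ x < y ∧ fKappa κ y < fKappa κ x := by
  have hκ0 : 0 < κ := by linarith
  obtain ⟨y, hyκ, hy0, hy1⟩ :=
    ((eventually_two_mul_rpow_lt hκ).and (Ioo_mem_nhdsGT one_pos)).exists
  have hfy := fKappa_lt_half_of_two_mul_rpow_lt hκ0 hy0 hy1 hyκ
  obtain ⟨x, hfx, hx0, hxy⟩ :=
    (((tendsto_fKappa_nhdsGT_zero hκ0).eventually_const_lt hfy).and
      (Ioo_mem_nhdsGT hy0)).exists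
  exact ⟨x, y, hx0, hxy, hfx⟩
end

section
/- Let k and n be integers with 1 ≤ k < n. For every real x > 0 with x ≠ 1, the following identity holds: (k/(2n))·(x−1)(x^{k/n}+1)/(x^{k/n}−1) = (k/(2n))·[ x^{k/n} + 1 + Σ_{l=k}^{n−1} ( Σ_{j=0}^{k−1} x^{(j−l)/n} )^{−1} + Σ_{l=k}^{n−1} ( Σ_{j=0}^{k−1} x^{(j−l−k)/n} )^{−1} ]. -/
/-!
Substituting `y = x^{1/n}` turns every real power into an integer power of `y`. Each inner sum
is then a geometric sum, `Σ_{j<k} y^{j-l} = y^{-l}(y^k - 1)/(y - 1)`, so its inverse is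
`y^l (y - 1)/(y^k - 1)`, and summing over `k ≤ l < n` gives `(y^n - y^k)/(y^k - 1)` for the first
family and `y^k` times that for the second. Together with `y^k + 1` this adds up to
`(y^n - 1)(y^k + 1)/(y^k - 1)`, which is the left-hand side since `y^n = x`.
-/

open Finset

section GeomSum

variable {K : Type*} [Field K] {y : K}

theorem inv_sum_range_pow_div_pow (hy : y ≠ 1) (k l : ℕ) :
    (∑ j ∈ range k, y ^ j / y ^ l)⁻¹ = y ^ l * (y - 1) / (y ^ k - 1) := by
  rw [← sum_div, geom_sum_eq hy, div_div, inv_div]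
  ring

theorem sum_Ico_inv_sum_range_pow_div_pow (hy : y ≠ 1) {k n : ℕ} (hkn : k ≤ n) (m : ℕ) :
    ∑ l ∈ Ico k n, (∑ j ∈ range k, y ^ j / y ^ (l + m))⁻¹ =
      y ^ m * (y ^ n - y ^ k) / (y ^ k - 1) := by
  have hterm : ∀ l ∈ Ico k n, (∑ j ∈ range k, y ^ j / y ^ (l + m))⁻¹ =
      y ^ l * (y ^ m * (y - 1) / (y ^ k - 1)) := fun l _ => by
    rw [inv_sum_range_pow_div_pow hy, pow_add]
    ring
  rw [sum_congr rfl hterm, ← sum_mul, geom_sum_Ico hy hkn]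
  field_simp [sub_ne_zero.mpr hy]

end GeomSum

theorem Real.rpow_div_natCast_eq_rpow_inv_rpow {x : ℝ} (hx : 0 ≤ x) (r : ℝ) (n : ℕ) :
    x ^ (r / n) = (x ^ (n⁻¹ : ℝ)) ^ r := by
  rw [← Real.rpow_mul hx, div_eq_inv_mul]

/-- For integers `1 ≤ k < n` and real `x > 0`, `x ≠ 1`:
`(k/(2n))·(x−1)(x^{k/n}+1)/(x^{k/n}−1)
  = (k/(2n))·[x^{k/n} + 1 + Σ_{l=k}^{n−1} (Σ_{j=0}^{k−1} x^{(j−l)/n})⁻¹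
      + Σ_{l=k}^{n−1} (Σ_{j=0}^{k−1} x^{(j−l−k)/n})⁻¹]`,
where `x ^ r` denotes the real power of the positive real `x`. -/
theorem fKappa_rational_decomposition (k n : ℕ) (hk : 1 ≤ k) (hkn : k < n)
    (x : ℝ) (hx : 0 < x) (hx1 : x ≠ 1) :
    (k : ℝ) / (2 * n) * ((x - 1) * (x ^ ((k : ℝ) / n) + 1)) / (x ^ ((k : ℝ) / n) - 1) =
      (k : ℝ) / (2 * n) * (x ^ ((k : ℝ) / n) + 1 +
        (∑ l ∈ Finset.Ico k n, (∑ j ∈ Finset.range k, x ^ (((j : ℝ) - l) / n))⁻¹) +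
        (∑ l ∈ Finset.Ico k n, (∑ j ∈ Finset.range k, x ^ (((j : ℝ) - l - k) / n))⁻¹)) := by
  set y := x ^ ((n : ℝ)⁻¹) with hy_def
  have hy : 0 < y := Real.rpow_pos_of_pos hx _
  have hyn : y ^ n = x := Real.rpow_inv_natCast_pow hx.le (by omega)
  have hy1 : y ≠ 1 := fun h => hx1 (by rw [← hyn, h, one_pow])
  have hyk : y ^ k - 1 ≠ 0 :=
    sub_ne_zero.mpr fun h => hy1 ((pow_eq_one_iff_of_nonneg hy.le (by omega)).mp h)
  simp only [Real.rpow_div_natCast_eq_rpow_inv_rpow hx.le, ← hy_def, Real.rpow_sub hy,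
    Real.rpow_natCast, div_div, ← pow_add]
  have hS₁ := sum_Ico_inv_sum_range_pow_div_pow hy1 hkn.le 0
  have hS₂ := sum_Ico_inv_sum_range_pow_div_pow hy1 hkn.le k
  simp only [add_zero, pow_zero, one_mul] at hS₁
  rw [hS₁, hS₂, ← hyn]
  field_simp
  ring
end

section
/- The Bogoliubov–Kubo–Mori function f(x) = (x−1)/ln(x) for x ≠ 1, with f(1) = 1, is operator monotone: for every n ≥ 1 and all positive definite Hermitian n×n complex matrices A, B with A ≤ B in the Loewner order, f(A) ≤ f(B), where f is applied via the functional calculus. -/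
open Matrix
open scoped ComplexOrder

/-- The Bogoliubov–Kubo–Mori function `f(x) = (x−1)/ln(x)` for `x ≠ 1`, with `f(1) = 1`. -/
noncomputable def fBKM : ℝ → ℝ := fun x => if x = 1 then 1 else (x - 1) / Real.log x

namespace BKMaux

lemma fBKM_pos {x : ℝ} (hx : 0 < x) : 0 < fBKM x := by
  unfold fBKM
  rcases eq_or_ne x 1 with h | h
  · simp [h]
  rw [if_neg h]
  rcases lt_or_gt_of_ne h with hlt | hgt
  · apply div_pos_of_neg_of_neg (by linarith) (Real.log_neg hx hlt)
  · exact div_pos (by linarith) (Real.log_pos hgt)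

lemma denom_pos {x t : ℝ} (hx : 0 < x) (ht0 : 0 ≤ t) (ht1 : t ≤ 1) :
    0 < 1 - t + t * x := by
  rcases le_or_gt 1 x with h | h
  · nlinarith
  · nlinarith

lemma inv_fBKM_integral {x : ℝ} (hx : 0 < x) :
    (fBKM x)⁻¹ = ∫ t in (0:ℝ)..1, (1 - t + t * x)⁻¹ := by
  rcases eq_or_ne x 1 with h | h
  · subst h
    simp [fBKM]
  have hlog : Real.log x ≠ 0 := by
    intro h0
    rcases Real.log_eq_zero.mp h0 with h1 | h1 | h1 <;> [linarith; exact h h1; linarith]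
  have hx1 : x - 1 ≠ 0 := sub_ne_zero.2 h
  have hfinv : (fBKM x)⁻¹ = Real.log x / (x - 1) := by
    rw [fBKM]
    simp only [if_neg h]
    rw [inv_div]
  rw [hfinv]
  have hposIcc : ∀ t ∈ Set.uIcc (0:ℝ) 1, 0 < 1 - t + t * x := by
    intro t ht
    rw [Set.uIcc_of_le (zero_le_one)] at ht
    exact denom_pos hx ht.1 ht.2
  have hderiv : ∀ t ∈ Set.uIcc (0:ℝ) 1,
      HasDerivAt (fun s => Real.log (1 - s + s * x) / (x - 1)) ((1 - t + t * x)⁻¹) t := by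
    intro t ht
    have hne : 1 - t + t * x ≠ 0 := (hposIcc t ht).ne'
    have h1 : HasDerivAt (fun s : ℝ => 1 - s + s * x) (x - 1) t := by
      have := ((hasDerivAt_id t).const_sub 1).add ((hasDerivAt_id t).mul_const x)
      exact this.congr_deriv (by ring)
    have h2 := (Real.hasDerivAt_log hne).comp t h1
    have h3 := h2.div_const (x - 1)
    exact h3.congr_deriv (mul_div_cancel_right₀ _ hx1)
  have hcont : IntervalIntegrable (fun t => (1 - t + t * x)⁻¹)
      MeasureTheory.volume 0 1 := by
    apply ContinuousOn.intervalIntegrable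
    apply ContinuousOn.inv₀
    · fun_prop
    · intro t ht; exact (hposIcc t ht).ne'
  rw [intervalIntegral.integral_eq_sub_of_hasDerivAt hderiv hcont]
  simp [hx.ne']


variable {n : Type*} [Fintype n] [DecidableEq n]

lemma conj_mul_conj {U : Matrix n n ℂ} (hU' : star U * U = 1) (d e : n → ℂ) :
    (U * diagonal d * star U) * (U * diagonal e * star U)
      = U * diagonal (d * e) * star U := by
  have h : (U * diagonal d * star U) * (U * diagonal e * star U)
      = U * (diagonal d * (star U * U) * diagonal e) * star U := by
    simp only [Matrix.mul_assoc]
  rw [h, hU', mul_one, diagonal_mul_diagonal]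
  rfl

lemma conj_inv' {U : Matrix n n ℂ} (hU : U * star U = 1) (hU' : star U * U = 1)
    {d : n → ℂ} (hd : ∀ i, d i ≠ 0) :
    (U * diagonal d * star U)⁻¹ = U * diagonal d⁻¹ * star U := by
  apply inv_eq_right_inv
  rw [conj_mul_conj hU']
  have h1 : d * d⁻¹ = 1 := by
    funext i; simp [mul_inv_cancel₀ (hd i)]
  rw [h1, show Matrix.diagonal (1 : n → ℂ) = 1 from Matrix.diagonal_one, mul_one]
  exact hU

lemma quad_conj {U : Matrix n n ℂ} (d : n → ℝ) (v : n → ℂ) :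
    star v ⬝ᵥ (U * diagonal (Complex.ofReal ∘ d) * star U) *ᵥ v
      = ((∑ i, d i * Complex.normSq ((star U *ᵥ v) i) : ℝ) : ℂ) := by
  set w := star U *ᵥ v with hw
  have hsw : star v ᵥ* U = star w := by
    rw [hw, star_mulVec]
    simp [Matrix.star_eq_conjTranspose]
  rw [← mulVec_mulVec, ← mulVec_mulVec, dotProduct_mulVec, hsw, ← hw]
  rw [dotProduct, Complex.ofReal_sum]
  simp only [mulVec_diagonal, Pi.star_apply, Function.comp_apply]
  congr 1
  funext i
  rw [Complex.ofReal_mul]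
  rw [Complex.star_def,
    show (starRingEnd ℂ) (w i) * (↑(d i) * w i) = ↑(d i) * ((starRingEnd ℂ) (w i) * w i) by ring,
    show (starRingEnd ℂ) (w i) * w i = (Complex.normSq (w i) : ℂ) by
      rw [mul_comm, Complex.mul_conj]]

variable {n : Type*} [Fintype n] [DecidableEq n]

lemma herm_conj {U : Matrix n n ℂ} (d : n → ℝ) :
    (U * diagonal (Complex.ofReal ∘ d) * star U).IsHermitian := by
  unfold Matrix.IsHermitian
  rw [← Matrix.star_eq_conjTranspose]
  simp only [StarMul.star_mul, star_star, Matrix.star_eq_conjTranspose (diagonal _),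
    diagonal_conjTranspose]
  rw [mul_assoc]
  have : star (Complex.ofReal ∘ d) = Complex.ofReal ∘ d := by
    funext i; simp [Pi.star_def, Complex.star_def, Complex.conj_ofReal]
  rw [this]

lemma psd_conj {U : Matrix n n ℂ} {d : n → ℝ} (hd : ∀ i, 0 ≤ d i) :
    (U * diagonal (Complex.ofReal ∘ d) * star U).PosSemidef := by
  rw [Matrix.star_eq_conjTranspose]
  exact (Matrix.PosSemidef.diagonal (fun i => by
    simpa using Complex.zero_le_real.2 (hd i))).mul_mul_conjTranspose_same U

lemma pd_conj {U : Matrix n n ℂ} (hU : U * star U = 1) {d : n → ℝ}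
    (hd : ∀ i, 0 < d i) :
    (U * diagonal (Complex.ofReal ∘ d) * star U).PosDef := by
  refine .of_dotProduct_mulVec_pos (herm_conj d) (fun v hv => ?_)
  rw [quad_conj]
  set w := star U *ᵥ v with hw
  have hwne : w ≠ 0 := by
    intro h
    apply hv
    have : v = (U * star U) *ᵥ v := by rw [hU, one_mulVec]
    rw [← mulVec_mulVec, ← hw, h, mulVec_zero] at this
    exact this
  obtain ⟨j, hj⟩ := Function.ne_iff.1 hwne
  rw [Complex.zero_lt_real]
  refine Finset.sum_pos' (fun i _ => mul_nonneg (hd i).le (Complex.normSq_nonneg _)) ?_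
  exact ⟨j, Finset.mem_univ j, mul_pos (hd j) (Complex.normSq_pos.2 hj)⟩

lemma nonneg_of_psd_conj {U : Matrix n n ℂ} (hU' : star U * U = 1) {d : n → ℝ}
    (h : (U * diagonal (Complex.ofReal ∘ d) * star U).PosSemidef) (i : n) : 0 ≤ d i := by
  have := h.dotProduct_mulVec_nonneg (U *ᵥ Pi.single i 1)
  rw [quad_conj] at this
  have hw : star U *ᵥ (U *ᵥ Pi.single i 1) = Pi.single i 1 := by
    rw [mulVec_mulVec, hU', one_mulVec]
  rw [hw] at this
  have hsum : (∑ j, d j * Complex.normSq ((Pi.single i 1 : n → ℂ) j)) = d i := by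
    rw [Finset.sum_eq_single i]
    · simp
    · intro j _ hj; simp [Pi.single_eq_of_ne hj]
    · simp
  rw [hsum] at this
  exact Complex.zero_le_real.1 this


lemma conj_sub {U : Matrix n n ℂ} (d e : n → ℂ) :
    U * diagonal d * star U - U * diagonal e * star U
      = U * diagonal (d - e) * star U := by
  have h : diagonal (d - e) = diagonal d - diagonal e := (diagonal_sub d e).symm
  rw [h, mul_sub, sub_mul]

lemma ofReal_comp_inv (d : n → ℝ) : (Complex.ofReal ∘ d)⁻¹ = Complex.ofReal ∘ d⁻¹ := by
  funext i; simp

/-- If `C` is positive definite and `C - 1` is PSD then `1 - C⁻¹` is PSD. -/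
lemma one_sub_inv_psd {C : Matrix n n ℂ} (hC : C.PosDef)
    (h1 : (C - 1).PosSemidef) : (1 - C⁻¹).PosSemidef := by
  have hH := hC.isHermitian
  set V : Matrix n n ℂ := (hH.eigenvectorUnitary : Matrix n n ℂ) with hVdef
  have hV : V * star V = 1 := (Matrix.mem_unitaryGroup_iff).mp hH.eigenvectorUnitary.2
  have hV' : star V * V = 1 := (Matrix.mem_unitaryGroup_iff').mp hH.eigenvectorUnitary.2
  set μ : n → ℝ := hH.eigenvalues with hμdef
  have hspec : C = V * diagonal (Complex.ofReal ∘ μ) * star V := hH.spectral_theorem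
  have hone : (1 : Matrix n n ℂ) = V * diagonal (Complex.ofReal ∘ (fun _ => 1)) * star V := by
    have : diagonal (Complex.ofReal ∘ (fun _ : n => 1)) = 1 := by
      rw [show Complex.ofReal ∘ (fun _ : n => (1:ℝ)) = fun _ => (1:ℂ) by funext i; simp,
        diagonal_one]
    rw [this, mul_one, hV]
  have hmu1 : ∀ i, 1 ≤ μ i := by
    intro i
    have hsub : C - 1 = V * diagonal ((Complex.ofReal ∘ μ) - (Complex.ofReal ∘ fun _ => 1))
        * star V := by rw [← conj_sub, ← hspec, ← hone]
    have : (Complex.ofReal ∘ μ) - (Complex.ofReal ∘ fun _ => 1)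
        = Complex.ofReal ∘ (fun j => μ j - 1) := by funext j; simp
    rw [this] at hsub
    have := nonneg_of_psd_conj hV' (hsub ▸ h1) i
    linarith
  have hmu0 : ∀ i, (Complex.ofReal ∘ μ) i ≠ 0 := by
    intro i
    simp only [Function.comp_apply, ne_eq, Complex.ofReal_eq_zero]
    intro h; have := hmu1 i; rw [h] at this; linarith
  have hCinv : C⁻¹ = V * diagonal (Complex.ofReal ∘ μ⁻¹) * star V := by
    rw [hspec, conj_inv' hV hV' hmu0, ofReal_comp_inv]
  have hsub2 : 1 - C⁻¹ = V * diagonal (Complex.ofReal ∘ (fun i => 1 - (μ i)⁻¹)) * star V := by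
    rw [hone, hCinv, conj_sub]
    have he : (Complex.ofReal ∘ fun _ : n => 1) - (Complex.ofReal ∘ μ⁻¹)
        = Complex.ofReal ∘ (fun i => 1 - (μ i)⁻¹) := by
      funext j; simp
    rw [he]
  rw [hsub2]
  refine psd_conj (fun i => ?_)
  have h1i := hmu1 i
  have : (μ i)⁻¹ ≤ 1 := by
    rw [inv_le_one_iff₀]; right; linarith
  linarith

/-- Matrix inversion is antitone on positive definite matrices. -/
lemma inv_antitone {A B : Matrix n n ℂ} (hA : A.PosDef) (hB : B.PosDef)
    (hAB : (B - A).PosSemidef) : (A⁻¹ - B⁻¹).PosSemidef := by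
  obtain ⟨S, hSh, hSS⟩ : ∃ S : Matrix n n ℂ, S.IsHermitian ∧ S * S = A :=
    open MatrixOrder in ⟨CFC.sqrt A, (Matrix.nonneg_iff_posSemidef.mp (CFC.sqrt_nonneg A)).1,
      CFC.sqrt_mul_sqrt_self A (Matrix.nonneg_iff_posSemidef.mpr hA.posSemidef)⟩
  have hdet : IsUnit S.det := by
    have h : S.det * S.det = A.det := by rw [← det_mul, hSS]
    have h2 := hA.det_pos
    apply isUnit_iff_ne_zero.2
    intro h0; rw [h0, mul_zero] at h; rw [← h] at h2; exact lt_irrefl _ h2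
  obtain ⟨T, hTS, hST, hTh, hTinv, hSinv⟩ :
      ∃ T : Matrix n n ℂ, T * S = 1 ∧ S * T = 1 ∧ Tᴴ = T ∧ T⁻¹ = S ∧ S⁻¹ = T :=
    ⟨S⁻¹, nonsing_inv_mul S hdet, mul_nonsing_inv S hdet,
      by rw [conjTranspose_nonsing_inv, hSh.eq], nonsing_inv_nonsing_inv S hdet, rfl⟩
  have hC : (Tᴴ * B * T).PosDef := by
    refine .of_dotProduct_mulVec_pos (isHermitian_conjTranspose_mul_mul T hB.1) fun v hv => ?_
    have hTv : T *ᵥ v ≠ 0 := by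
      intro h
      apply hv
      rw [← one_mulVec v, ← hST, ← mulVec_mulVec, h, mulVec_zero]
    simpa only [star_mulVec, dotProduct_mulVec, vecMul_vecMul] using hB.dotProduct_mulVec_pos hTv
  rw [hTh] at hC
  have hTAT : T * A * T = 1 := by
    rw [← hSS, show T * (S * S) * T = (T * S) * (S * T) by simp only [Matrix.mul_assoc],
      hTS, hST, one_mul]
  have hC1 : ((T * B * T) - 1).PosSemidef := by
    have h : (T * B * T) - 1 = Tᴴ * (B - A) * T := by
      rw [hTh, ← hTAT, mul_sub, sub_mul]
    rw [h]
    exact hAB.conjTranspose_mul_mul_same T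
  have h2 := one_sub_inv_psd hC hC1
  have hkey : A⁻¹ - B⁻¹ = Tᴴ * (1 - (T * B * T)⁻¹) * T := by
    have hAinv : A⁻¹ = T * T := by
      rw [← hSS, Matrix.mul_inv_rev, hSinv]
    have hCinv : (T * B * T)⁻¹ = S * B⁻¹ * S := by
      rw [Matrix.mul_inv_rev, Matrix.mul_inv_rev, hTinv, Matrix.mul_assoc]
    have hTCT : T * (T * B * T)⁻¹ * T = B⁻¹ := by
      rw [hCinv, show T * (S * B⁻¹ * S) * T = (T * S) * (B⁻¹ * (S * T)) by
        simp only [Matrix.mul_assoc], hTS, hST, one_mul, mul_one]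
    rw [hTh, mul_sub, sub_mul, mul_one, ← hAinv, show T * (T * B * T)⁻¹ * T = B⁻¹ from hTCT]
  rw [hkey]
  exact h2.conjTranspose_mul_mul_same T

lemma psd_smul {M : Matrix n n ℂ} (hM : M.PosSemidef) {t : ℝ} (ht : 0 ≤ t) :
    ((t:ℂ) • M).PosSemidef := by
  refine .of_dotProduct_mulVec_nonneg ?_ ?_
  · unfold Matrix.IsHermitian
    rw [conjTranspose_smul, hM.1.eq]
    congr 1
    simp [Complex.star_def, Complex.conj_ofReal]
  · intro v
    rw [smul_mulVec, dotProduct_smul, smul_eq_mul]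
    exact mul_nonneg (Complex.zero_le_real.2 ht) (hM.dotProduct_mulVec_nonneg v)

lemma conj_affine {U M : Matrix n n ℂ} (hU : U * star U = 1) {lam : n → ℝ}
    (hspec : M = U * diagonal (Complex.ofReal ∘ lam) * star U) (t : ℝ) :
    U * diagonal (Complex.ofReal ∘ fun i => 1 - t + t * lam i) * star U
      = ((1 - t : ℝ) : ℂ) • 1 + ((t : ℝ) : ℂ) • M := by
  have hdiag : diagonal (Complex.ofReal ∘ fun i => 1 - t + t * lam i)
      = ((1 - t : ℝ) : ℂ) • (1 : Matrix n n ℂ)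
        + ((t : ℝ) : ℂ) • diagonal (Complex.ofReal ∘ lam) := by
    ext i j
    rcases eq_or_ne i j with rfl | hij
    · simp only [diagonal_apply_eq, Matrix.add_apply, Matrix.smul_apply,
        Matrix.one_apply_eq, Function.comp_apply, smul_eq_mul, mul_one]
      push_cast; ring
    · simp [diagonal_apply_ne _ hij, Matrix.one_apply_ne hij]
  rw [hdiag, mul_add, add_mul, Matrix.mul_smul, Matrix.smul_mul,
    Matrix.mul_smul, Matrix.smul_mul, mul_one, hU, hspec]


lemma key_rep {M : Matrix n n ℂ} (hM : M.PosDef) (v : n → ℂ) :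
    ∃ φ : ℝ → ℝ,
      (∀ t : ℝ, 0 ≤ t → t ≤ 1 →
        (((1 - t : ℝ) : ℂ) • 1 + ((t : ℝ) : ℂ) • M).PosDef ∧
        star v ⬝ᵥ (((1 - t : ℝ) : ℂ) • 1 + ((t : ℝ) : ℂ) • M)⁻¹ *ᵥ v
          = Complex.ofReal (φ t)) ∧
      IntervalIntegrable φ MeasureTheory.volume 0 1 ∧
      star v ⬝ᵥ (hM.isHermitian.cfc fBKM)⁻¹ *ᵥ v
        = Complex.ofReal (∫ t in (0:ℝ)..1, φ t) := by
  have hH := hM.isHermitian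
  set U : Matrix n n ℂ := (hH.eigenvectorUnitary : Matrix n n ℂ) with hUdef
  have hU : U * star U = 1 := (Matrix.mem_unitaryGroup_iff).mp hH.eigenvectorUnitary.2
  have hU' : star U * U = 1 := (Matrix.mem_unitaryGroup_iff').mp hH.eigenvectorUnitary.2
  set lam : n → ℝ := hH.eigenvalues with hlamdef
  have hspec : M = U * diagonal (Complex.ofReal ∘ lam) * star U := hH.spectral_theorem
  have hlam : ∀ i, 0 < lam i := hM.eigenvalues_pos
  set w : n → ℂ := star U *ᵥ v with hwdef
  set c : n → ℝ := fun i => Complex.normSq (w i) with hcdef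
  refine ⟨fun t => ∑ i, (1 - t + t * lam i)⁻¹ * c i, fun t ht0 ht1 => ?_, ?_, ?_⟩
  · have hrep := conj_affine hU hspec t
    constructor
    · rw [← hrep]
      exact pd_conj hU (fun i => denom_pos (hlam i) ht0 ht1)
    · rw [← hrep, conj_inv' hU hU' (fun i => ?_), ofReal_comp_inv, quad_conj]
      · rfl
      · simp only [Function.comp_apply, ne_eq, Complex.ofReal_eq_zero]
        exact (denom_pos (hlam i) ht0 ht1).ne'
  · apply ContinuousOn.intervalIntegrable
    apply continuousOn_finset_sum
    intro i _
    apply ContinuousOn.mul _ continuousOn_const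
    apply ContinuousOn.inv₀ (by fun_prop)
    intro t ht
    rw [Set.uIcc_of_le zero_le_one] at ht
    exact (denom_pos (hlam i) ht.1 ht.2).ne'
  · have hcfc : hH.cfc fBKM = U * diagonal (Complex.ofReal ∘ (fBKM ∘ lam)) * star U := rfl
    rw [hcfc, conj_inv' hU hU' (fun i => ?_), ofReal_comp_inv, quad_conj]
    swap
    · simp only [Function.comp_apply, ne_eq, Complex.ofReal_eq_zero]
      exact (fBKM_pos (hlam i)).ne'
    congr 1
    have hterm : ∀ i ∈ Finset.univ, ((fBKM ∘ lam)⁻¹ i) * c i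
        = ∫ t in (0:ℝ)..1, (1 - t + t * lam i)⁻¹ * c i := by
      intro i _
      rw [Pi.inv_apply, Function.comp_apply, inv_fBKM_integral (hlam i),
        intervalIntegral.integral_mul_const]
    rw [Finset.sum_congr rfl hterm, ← intervalIntegral.integral_finset_sum]
    intro i _
    apply ContinuousOn.intervalIntegrable
    apply ContinuousOn.mul _ continuousOn_const
    apply ContinuousOn.inv₀ (by fun_prop)
    intro t ht
    rw [Set.uIcc_of_le zero_le_one] at ht
    exact (denom_pos (hlam i) ht.1 ht.2).ne'

lemma pd_cfc_fBKM {M : Matrix n n ℂ} (hM : M.PosDef) :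
    (hM.isHermitian.cfc fBKM).PosDef := by
  have hH := hM.isHermitian
  have hU : (hH.eigenvectorUnitary : Matrix n n ℂ)
      * star (hH.eigenvectorUnitary : Matrix n n ℂ) = 1 :=
    (Matrix.mem_unitaryGroup_iff).mp hH.eigenvectorUnitary.2
  have hcfc : hH.cfc fBKM = (hH.eigenvectorUnitary : Matrix n n ℂ)
      * diagonal (Complex.ofReal ∘ (fBKM ∘ hH.eigenvalues))
      * star (hH.eigenvectorUnitary : Matrix n n ℂ) := rfl
  rw [hcfc]
  exact pd_conj hU (fun i => fBKM_pos (hM.eigenvalues_pos i))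

end BKMaux

open BKMaux in
/-- The Bogoliubov–Kubo–Mori function is operator monotone: for every `n ≥ 1` and all
positive definite Hermitian `n×n` complex matrices `A ≤ B` (Loewner order), applying it
to the eigenvalues in a unitary diagonalization gives `f(A) ≤ f(B)`. -/
theorem fBKM_operatorMonotone :
    ∀ (n : ℕ), 1 ≤ n → ∀ (A B : Matrix (Fin n) (Fin n) ℂ)
      (hA : A.PosDef) (hB : B.PosDef), (B - A).PosSemidef →
      (hB.isHermitian.cfc fBKM - hA.isHermitian.cfc fBKM).PosSemidef := by
  intro n _ A B hA hB hAB
  have hPA : (hA.isHermitian.cfc fBKM).PosDef := pd_cfc_fBKM hA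
  have hPB : (hB.isHermitian.cfc fBKM).PosDef := pd_cfc_fBKM hB
  -- Step 1: (PA⁻¹ - PB⁻¹) is PSD.
  have hstep : ((hA.isHermitian.cfc fBKM)⁻¹ - (hB.isHermitian.cfc fBKM)⁻¹).PosSemidef := by
    refine .of_dotProduct_mulVec_nonneg ?_ ?_
    · exact hPA.inv.isHermitian.sub hPB.inv.isHermitian
    · intro v
      obtain ⟨φA, hφA, hφAint, hφAval⟩ := key_rep hA v
      obtain ⟨φB, hφB, hφBint, hφBval⟩ := key_rep hB v
      rw [Matrix.sub_mulVec, dotProduct_sub, hφAval, hφBval, ← Complex.ofReal_sub]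
      rw [Complex.zero_le_real, sub_nonneg]
      apply intervalIntegral.integral_mono_on zero_le_one hφBint hφAint
      intro t ht
      obtain ⟨hApd, hAq⟩ := hφA t ht.1 ht.2
      obtain ⟨hBpd, hBq⟩ := hφB t ht.1 ht.2
      have hdiff : ((((1 - t : ℝ) : ℂ) • 1 + ((t : ℝ) : ℂ) • B)
          - (((1 - t : ℝ) : ℂ) • 1 + ((t : ℝ) : ℂ) • A)) = ((t:ℝ):ℂ) • (B - A) := by
        rw [add_sub_add_left_eq_sub, ← smul_sub]
      have hanti := inv_antitone hApd hBpd (by rw [hdiff]; exact psd_smul hAB ht.1)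
      have := hanti.dotProduct_mulVec_nonneg v
      rw [Matrix.sub_mulVec, dotProduct_sub, hAq, hBq, ← Complex.ofReal_sub,
        Complex.zero_le_real, sub_nonneg] at this
      exact this
  -- Step 2: invert again.
  have hres := inv_antitone hPB.inv hPA.inv hstep
  rw [nonsing_inv_nonsing_inv _ (isUnit_iff_ne_zero.2 hPB.det_pos.ne'),
    nonsing_inv_nonsing_inv _ (isUnit_iff_ne_zero.2 hPA.det_pos.ne')] at hres
  exact hres
end

section
/- Let p > 0 be a real number. For an invertible n×n complex matrix g and a faithful state ρ (a positive definite Hermitian n×n complex matrix with trace 1), define β^p(g, ρ) = (g · ρ^p · g*)^{1/p} / Tr( (g · ρ^p · g*)^{1/p} ). Then: (i) β^p(g, ρ) is again a positive definite Hermitian matrix with trace 1; (ii) β^p(𝟙, ρ) = ρ; and (iii) β^p(g₁, β^p(g₂, ρ)) = β^p(g₁g₂, ρ) for all invertible g₁, g₂, so that β^p defines an action of the general linear group on the set of faithful states. -/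
open Matrix
open scoped ComplexOrder

/-- The real power `A^r` of a matrix, applying `x ↦ x^r` to the eigenvalues in a unitary
diagonalization via the (real) continuous functional calculus for Hermitian matrices. -/
noncomputable def matRPow {n : ℕ} (A : Matrix (Fin n) (Fin n) ℂ) (r : ℝ) :
    Matrix (Fin n) (Fin n) ℂ :=
  cfc (fun x : ℝ => x ^ r) A

/-- The normalized action `β^p(g,ρ) = (g·ρ^p·g*)^{1/p} / Tr((g·ρ^p·g*)^{1/p})`. -/
noncomputable def betaAct {n : ℕ} (p : ℝ) (g ρ : Matrix (Fin n) (Fin n) ℂ) :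
    Matrix (Fin n) (Fin n) ℂ :=
  (Matrix.trace (matRPow (g * matRPow ρ p * gᴴ) (1 / p)))⁻¹ •
    matRPow (g * matRPow ρ p * gᴴ) (1 / p)

namespace BetaAux

variable {n : ℕ}

lemma spectrum_pos {A : Matrix (Fin n) (Fin n) ℂ} (hA : A.PosDef) :
    ∀ x ∈ spectrum ℝ A, 0 < x := by
  intro x hx
  rw [Matrix.IsHermitian.spectrum_real_eq_range_eigenvalues hA.1] at hx
  obtain ⟨i, rfl⟩ := hx
  exact hA.eigenvalues_pos i

lemma contOn_rpow (r : ℝ) {s : Set ℝ} (hs : ∀ x ∈ s, 0 < x) :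
    ContinuousOn (fun x : ℝ => x ^ r) s := fun x hx =>
  (Real.continuousAt_rpow_const x r (Or.inl (hs x hx).ne')).continuousWithinAt

lemma posDef_conj {A g : Matrix (Fin n) (Fin n) ℂ} (hA : A.PosDef) (hg : IsUnit g) :
    (g * A * gᴴ).PosDef := by
  refine Matrix.PosDef.of_dotProduct_mulVec_pos ?_ fun x hx => ?_
  · simpa using Matrix.isHermitian_conjTranspose_mul_mul gᴴ hA.1
  · have hy : gᴴ *ᵥ x ≠ 0 := by
      have hinj : Function.Injective (gᴴ.mulVec) :=
        Matrix.mulVec_injective_iff_isUnit.mpr ((Matrix.isUnit_conjTranspose g).mpr hg)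
      intro h
      exact hx (hinj (by simpa using h))
    have := hA.dotProduct_mulVec_pos hy
    rw [star_mulVec, conjTranspose_conjTranspose] at this
    simpa [Matrix.dotProduct_mulVec, Matrix.vecMul_vecMul, mul_assoc] using this

lemma posDef_cfc {A : Matrix (Fin n) (Fin n) ℂ} (hA : A.PosDef) (f : ℝ → ℝ)
    (hf : ∀ i, 0 < f (hA.1.eigenvalues i)) : (cfc f A).PosDef := by
  rw [Matrix.IsHermitian.cfc_eq hA.1, Matrix.IsHermitian.cfc, Unitary.conjStarAlgAut_apply, star_eq_conjTranspose]
  refine posDef_conj (Matrix.PosDef.diagonal fun i => ?_)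
    ⟨Unitary.toUnits (Matrix.IsHermitian.eigenvectorUnitary hA.1), rfl⟩
  exact RCLike.ofReal_pos.mpr (hf i)

lemma posDef_matRPow {A : Matrix (Fin n) (Fin n) ℂ} (hA : A.PosDef) (r : ℝ) :
    (matRPow A r).PosDef :=
  posDef_cfc hA _ fun i => Real.rpow_pos_of_pos (hA.eigenvalues_pos i) r

lemma trace_pos (hn : 0 < n) {A : Matrix (Fin n) (Fin n) ℂ} (hA : A.PosDef) :
    0 < Matrix.trace A := by
  have hdiag : ∀ i, 0 < A i i := fun i => by
    have hne : (Pi.single i 1 : Fin n → ℂ) ≠ 0 := by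
      intro h
      have := congrFun h i
      simp at this
    have := hA.dotProduct_mulVec_pos hne
    simpa [dotProduct, Pi.single_apply, apply_ite] using this
  have : 0 < ∑ i, A i i :=
    Finset.sum_pos (fun i _ => hdiag i) ⟨⟨0, hn⟩, Finset.mem_univ _⟩
  simpa [Matrix.trace, Matrix.diag] using this

lemma matRPow_matRPow {A : Matrix (Fin n) (Fin n) ℂ} (hA : A.PosDef) {r s : ℝ}
    (hrs : r * s = 1) : matRPow (matRPow A r) s = A := by
  have hsp := spectrum_pos hA
  have hself : IsSelfAdjoint A := hA.1
  rw [matRPow, matRPow, ← cfc_comp' (fun x : ℝ => x ^ s) (fun x : ℝ => x ^ r) A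
    (contOn_rpow s (by rintro y ⟨x, hx, rfl⟩; exact Real.rpow_pos_of_pos (hsp x hx) r))
    (contOn_rpow r hsp)]
  calc cfc (fun x : ℝ => (x ^ r) ^ s) A = cfc (fun x : ℝ => x) A := by
        apply cfc_congr
        intro x hx
        show (x ^ r) ^ s = x
        rw [← Real.rpow_mul (hsp x hx).le, hrs, Real.rpow_one]
    _ = A := cfc_id' ℝ A

lemma coe_smul_eq (t : ℝ) (A : Matrix (Fin n) (Fin n) ℂ) : (t : ℂ) • A = t • A := by
  ext i j
  simp [Complex.real_smul]

lemma matRPow_smul {A : Matrix (Fin n) (Fin n) ℂ} (hA : A.PosDef) {t : ℝ} (ht : 0 < t)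
    (r : ℝ) : matRPow ((t : ℂ) • A) r = ((t ^ r : ℝ) : ℂ) • matRPow A r := by
  have hsp := spectrum_pos hA
  have hself : IsSelfAdjoint A := hA.1
  rw [matRPow, matRPow, coe_smul_eq, coe_smul_eq,
    ← cfc_comp_const_mul t (fun x : ℝ => x ^ r) A
      (contOn_rpow r (by rintro y ⟨x, hx, rfl⟩; exact mul_pos ht (hsp x hx)))]
  calc cfc (fun x : ℝ => (t * x) ^ r) A = cfc (fun x : ℝ => t ^ r * x ^ r) A := by
        apply cfc_congr
        intro x hx
        exact Real.mul_rpow ht.le (hsp x hx).le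
    _ = (t ^ r) • cfc (fun x : ℝ => x ^ r) A := cfc_const_mul _ _ _ (contOn_rpow r hsp)

lemma pos_eq_re {z : ℂ} (hz : 0 < z) : z = (z.re : ℂ) := by
  rw [Complex.pos_iff] at hz
  exact Complex.ext rfl (by simp [hz.2.symm])

lemma smul_posDef {c : ℝ} (hc : 0 < c) {A : Matrix (Fin n) (Fin n) ℂ} (hA : A.PosDef) :
    ((c : ℂ) • A).PosDef := by
  refine Matrix.PosDef.of_dotProduct_mulVec_pos ?_ fun x hx => ?_
  · show ((c : ℂ) • A)ᴴ = (c : ℂ) • A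
    rw [Matrix.conjTranspose_smul, hA.1.eq]
    norm_num
  · have := hA.dotProduct_mulVec_pos hx
    rw [Matrix.smul_mulVec, dotProduct_smul, smul_eq_mul]
    exact mul_pos (RCLike.ofReal_pos.mpr hc) this

end BetaAux

open BetaAux in
/-- For `p > 0` and a faithful state `ρ` (positive definite Hermitian with trace 1):
(i) `β^p(g,ρ)` is again positive definite with trace 1 for invertible `g`;
(ii) `β^p(𝟙,ρ) = ρ`; (iii) `β^p(g₁, β^p(g₂,ρ)) = β^p(g₁g₂, ρ)` for invertible `g₁, g₂`.
Hence `β^p` defines an action of the general linear group on faithful states. -/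
theorem betaAct_is_action {n : ℕ} (p : ℝ) (hp : 0 < p)
    (ρ : Matrix (Fin n) (Fin n) ℂ) (hρ : ρ.PosDef) (hρ1 : Matrix.trace ρ = 1) :
    (∀ g : Matrix (Fin n) (Fin n) ℂ, IsUnit g →
      (betaAct p g ρ).PosDef ∧ Matrix.trace (betaAct p g ρ) = 1) ∧
    betaAct p (1 : Matrix (Fin n) (Fin n) ℂ) ρ = ρ ∧
    (∀ g₁ g₂ : Matrix (Fin n) (Fin n) ℂ, IsUnit g₁ → IsUnit g₂ →
      betaAct p g₁ (betaAct p g₂ ρ) = betaAct p (g₁ * g₂) ρ) := by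
  -- n = 0 is impossible since trace ρ = 1
  rcases Nat.eq_zero_or_pos n with hn | hn
  · subst hn
    rw [Matrix.trace] at hρ1
    simp at hρ1
  have hBpos : ∀ g : Matrix (Fin n) (Fin n) ℂ, IsUnit g →
      (g * matRPow ρ p * gᴴ).PosDef := fun g hg =>
    posDef_conj (posDef_matRPow hρ p) hg
  have hCpos : ∀ g : Matrix (Fin n) (Fin n) ℂ, IsUnit g →
      (matRPow (g * matRPow ρ p * gᴴ) (1 / p)).PosDef := fun g hg =>
    posDef_matRPow (hBpos g hg) (1 / p)
  have htpos : ∀ g : Matrix (Fin n) (Fin n) ℂ, IsUnit g →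
      0 < Matrix.trace (matRPow (g * matRPow ρ p * gᴴ) (1 / p)) := fun g hg =>
    trace_pos hn (hCpos g hg)
  refine ⟨fun g hg => ?_, ?_, fun g₁ g₂ hg₁ hg₂ => ?_⟩
  · -- (i)
    have ht := htpos g hg
    have hC := hCpos g hg
    constructor
    · rw [betaAct, pos_eq_re ht, ← Complex.ofReal_inv]
      exact smul_posDef (inv_pos.mpr (Complex.pos_iff.mp ht).1) hC
    · rw [betaAct, Matrix.trace_smul, smul_eq_mul, inv_mul_cancel₀ ht.ne']
  · -- (ii)
    have h1 : (1 : Matrix (Fin n) (Fin n) ℂ) * matRPow ρ p * (1 : Matrix (Fin n) (Fin n) ℂ)ᴴ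
        = matRPow ρ p := by
      rw [conjTranspose_one, one_mul, mul_one]
    rw [betaAct, h1, matRPow_matRPow hρ (mul_one_div_cancel hp.ne'), hρ1]
    simp
  · -- (iii)
    have ht := htpos g₂ hg₂
    have hC := hCpos g₂ hg₂
    set C := matRPow (g₂ * matRPow ρ p * g₂ᴴ) (1 / p) with hCdef
    set c : ℝ := (Matrix.trace C).re with hcdef
    have hc : 0 < c := (Complex.pos_iff.mp ht).1
    have htc : Matrix.trace C = (c : ℂ) := pos_eq_re ht
    have hσ : betaAct p g₂ ρ = ((c⁻¹ : ℝ) : ℂ) • C := by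
      rw [betaAct, ← hCdef, htc, Complex.ofReal_inv]
    have hCp : matRPow C p = g₂ * matRPow ρ p * g₂ᴴ :=
      matRPow_matRPow (hBpos g₂ hg₂) (by field_simp)
    have hσp : matRPow (betaAct p g₂ ρ) p = ((c⁻¹ ^ p : ℝ) : ℂ) • (g₂ * matRPow ρ p * g₂ᴴ) := by
      rw [hσ, matRPow_smul hC (inv_pos.mpr hc) p, hCp]
    have hconj : g₁ * matRPow (betaAct p g₂ ρ) p * g₁ᴴ
        = ((c⁻¹ ^ p : ℝ) : ℂ) • ((g₁ * g₂) * matRPow ρ p * (g₁ * g₂)ᴴ) := by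
      rw [hσp, Matrix.conjTranspose_mul, Matrix.mul_smul, Matrix.smul_mul]
      congr 1
      noncomm_ring
    have hD := hBpos (g₁ * g₂) (hg₁.mul hg₂)
    have hfin : matRPow (g₁ * matRPow (betaAct p g₂ ρ) p * g₁ᴴ) (1 / p)
        = ((c⁻¹ : ℝ) : ℂ) • matRPow ((g₁ * g₂) * matRPow ρ p * (g₁ * g₂)ᴴ) (1 / p) := by
      rw [hconj, matRPow_smul hD (Real.rpow_pos_of_pos (inv_pos.mpr hc) p) (1 / p),
        ← Real.rpow_mul (inv_pos.mpr hc).le, mul_one_div_cancel hp.ne', Real.rpow_one]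
    have hτ := htpos (g₁ * g₂) (hg₁.mul hg₂)
    have hcne : ((c⁻¹ : ℝ) : ℂ) ≠ 0 := Complex.ofReal_ne_zero.mpr (inv_pos.mpr hc).ne'
    show (Matrix.trace (matRPow (g₁ * matRPow (betaAct p g₂ ρ) p * g₁ᴴ) (1 / p)))⁻¹ •
        matRPow (g₁ * matRPow (betaAct p g₂ ρ) p * g₁ᴴ) (1 / p) = _
    rw [hfin, Matrix.trace_smul, betaAct, smul_smul, smul_eq_mul, mul_inv]
    congr 1
    rw [mul_comm ((((c⁻¹ : ℝ)) : ℂ))⁻¹, mul_assoc, inv_mul_cancel₀ hcne, mul_one]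
end

section
/- Let ρ be a positive definite Hermitian n×n complex matrix with Tr(ρ) = 1, and let a, b be Hermitian n×n complex matrices. Define g(t) = exp( (t/2)(a − i·b) ) for t ∈ ℝ. Then the curve t ↦ g(t)·ρ·g(t)* / Tr( g(t)·ρ·g(t)* ) through the faithful states has derivative at t = 0 equal to (i/2)(ρb − bρ) + (1/2)(aρ + ρa) − Tr(ρa)·ρ; i.e. the fundamental vector field Z_{a,b} of the normalized GL-action at ρ equals [ρ,b] + {ρ,a} − Tr(ρa)·ρ, where [x,y] = (i/2)(xy − yx) and {x,y} = (1/2)(xy + yx). -/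
open Matrix
open scoped ComplexOrder

attribute [local instance] Matrix.linftyOpNormedAddCommGroup Matrix.linftyOpNormedRing
  Matrix.linftyOpNormedAlgebra

lemma aux_hasDerivAt_exp {n : ℕ} (c : Matrix (Fin n) (Fin n) ℂ) :
    HasDerivAt (fun t : ℝ => NormedSpace.exp ((t : ℂ) • c)) c 0 := by
  have h : ∀ t : ℝ, NormedSpace.exp ((t : ℂ) • c) = NormedSpace.exp (t • c) := by
    intro t
    norm_cast
  simp only [h]
  have := hasDerivAt_exp_smul_const (𝕂 := ℝ) c (0 : ℝ)
  simp at this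
  exact this

/-- Let `ρ` be a positive definite Hermitian matrix of trace 1 and `a, b` Hermitian.
With `g(t) = exp((t/2)(a − i·b))`, the curve `t ↦ g(t)·ρ·g(t)* / Tr(g(t)·ρ·g(t)*)` of
faithful states has derivative at `t = 0` equal to
`(i/2)(ρb − bρ) + (1/2)(aρ + ρa) − Tr(ρa)·ρ`, i.e. the fundamental vector field `Z_{a,b}`
of the normalized GL-action at `ρ` is `[ρ,b] + {ρ,a} − Tr(ρa)·ρ` with
`[x,y] = (i/2)(xy − yx)` and `{x,y} = (1/2)(xy + yx)`. -/
theorem fundamental_vector_field_GL {n : ℕ}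
    (ρ : Matrix (Fin n) (Fin n) ℂ) (hρ : ρ.PosDef) (hρ1 : Matrix.trace ρ = 1)
    (a b : Matrix (Fin n) (Fin n) ℂ) (ha : a.IsHermitian) (hb : b.IsHermitian) :
    HasDerivAt
      (fun t : ℝ =>
        (Matrix.trace (NormedSpace.exp (((t : ℂ) / 2) • (a - Complex.I • b)) * ρ *
            (NormedSpace.exp (((t : ℂ) / 2) • (a - Complex.I • b)))ᴴ))⁻¹ •
          (NormedSpace.exp (((t : ℂ) / 2) • (a - Complex.I • b)) * ρ *
            (NormedSpace.exp (((t : ℂ) / 2) • (a - Complex.I • b)))ᴴ))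
      ((Complex.I / 2) • (ρ * b - b * ρ) + ((1 : ℂ) / 2) • (a * ρ + ρ * a) -
        Matrix.trace (ρ * a) • ρ)
      0 := by
  set c₁ : Matrix (Fin n) (Fin n) ℂ := ((1 : ℂ) / 2) • (a - Complex.I • b) with hc₁
  set c₂ : Matrix (Fin n) (Fin n) ℂ := ((1 : ℂ) / 2) • (a + Complex.I • b) with hc₂
  have key : ∀ t : ℝ,
      NormedSpace.exp (((t : ℂ) / 2) • (a - Complex.I • b)) = NormedSpace.exp ((t : ℂ) • c₁) := by
    intro t
    rw [hc₁, smul_smul]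
    ring_nf
  have keyH : ∀ t : ℝ,
      (NormedSpace.exp (((t : ℂ) / 2) • (a - Complex.I • b)))ᴴ = NormedSpace.exp ((t : ℂ) • c₂) := by
    intro t
    rw [← Matrix.exp_conjTranspose]
    congr 1
    rw [Matrix.conjTranspose_smul, Matrix.conjTranspose_sub, Matrix.conjTranspose_smul,
      ha.eq, hb.eq, hc₂, smul_smul]
    simp [Complex.ext_iff]
    module
  have h1 := aux_hasDerivAt_exp c₁
  have h2 := aux_hasDerivAt_exp c₂
  have h3 : HasDerivAt
      (fun t : ℝ => NormedSpace.exp ((t : ℂ) • c₁) * ρ * NormedSpace.exp ((t : ℂ) • c₂))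
      (c₁ * ρ + ρ * c₂) 0 := by
    have := (h1.mul_const ρ).mul h2
    simp at this
    exact this
  have L : Matrix (Fin n) (Fin n) ℂ →L[ℂ] ℂ :=
    LinearMap.toContinuousLinearMap (Matrix.traceLinearMap (Fin n) ℂ ℂ)
  have htr : HasDerivAt
      (fun t : ℝ => Matrix.trace (NormedSpace.exp ((t : ℂ) • c₁) * ρ *
        NormedSpace.exp ((t : ℂ) • c₂)))
      (Matrix.trace (c₁ * ρ + ρ * c₂)) 0 := by
    have h4 := (((LinearMap.toContinuousLinearMap
      (Matrix.traceLinearMap (Fin n) ℂ ℂ)).restrictScalars ℝ).hasFDerivAt).comp_hasDerivAt (0 : ℝ) h3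
    exact h4
  have hne : Matrix.trace (NormedSpace.exp (((0:ℝ) : ℂ) • c₁) * ρ *
      NormedSpace.exp (((0:ℝ) : ℂ) • c₂)) ≠ 0 := by
    simp [hρ1]
  have hinv := (hasDerivAt_const (0:ℝ) (1:ℂ)).div htr hne
  simp only [Pi.div_def, one_div] at hinv
  have hfin := hinv.smul h3
  have htrc : Matrix.trace (c₁ * ρ + ρ * c₂) = Matrix.trace (ρ * a) := by
    rw [hc₁, hc₂]
    simp only [Matrix.smul_mul, Matrix.mul_smul, Matrix.sub_mul, Matrix.add_mul,
      Matrix.mul_sub, Matrix.mul_add, Matrix.trace_add, Matrix.trace_sub, Matrix.trace_smul,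
      smul_eq_mul, smul_sub, smul_add]
    rw [Matrix.trace_mul_comm a ρ, Matrix.trace_mul_comm b ρ]
    ring
  have heq : (fun t : ℝ =>
        (Matrix.trace (NormedSpace.exp (((t : ℂ) / 2) • (a - Complex.I • b)) * ρ *
            (NormedSpace.exp (((t : ℂ) / 2) • (a - Complex.I • b)))ᴴ))⁻¹ •
          (NormedSpace.exp (((t : ℂ) / 2) • (a - Complex.I • b)) * ρ *
            (NormedSpace.exp (((t : ℂ) / 2) • (a - Complex.I • b)))ᴴ)) =
      (fun t : ℝ =>
        (Matrix.trace (NormedSpace.exp ((t : ℂ) • c₁) * ρ * NormedSpace.exp ((t : ℂ) • c₂)))⁻¹ •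
          (NormedSpace.exp ((t : ℂ) • c₁) * ρ * NormedSpace.exp ((t : ℂ) • c₂))) := by
    funext t; rw [keyH t, key t]
  rw [heq]
  convert (show HasDerivAt (fun t : ℝ =>
      (Matrix.trace (NormedSpace.exp ((t : ℂ) • c₁) * ρ * NormedSpace.exp ((t : ℂ) • c₂)))⁻¹ •
        (NormedSpace.exp ((t : ℂ) • c₁) * ρ * NormedSpace.exp ((t : ℂ) • c₂))) _ 0 from hfin) using 1
  simp only [Complex.ofReal_zero, zero_smul, NormedSpace.exp_zero, one_mul, mul_one, hρ1,
    inv_one, one_smul, one_pow, div_one]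
  rw [htrc]
  rw [hc₁, hc₂]
  simp only [Matrix.smul_mul, Matrix.mul_smul, Matrix.sub_mul, Matrix.mul_add, smul_sub,
    smul_add, neg_smul, smul_smul]
  module
end

section
/- Let A and B be n×n complex matrices. Then the function t ↦ exp(A + t·B) is differentiable at t = 0 with derivative ∫₀¹ exp(λ·A) · B · exp((1−λ)·A) dλ (Duhamel's formula for the derivative of the matrix exponential). -/
open Matrix
open scoped ComplexOrder

attribute [local instance] Matrix.linftyOpNormedAddCommGroup Matrix.linftyOpNormedRing
  Matrix.linftyOpNormedAlgebra

namespace DuhamelAux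

variable {n : ℕ}

noncomputable instance : CompleteSpace (Matrix (Fin n) (Fin n) ℂ) :=
  FiniteDimensional.complete ℂ _

lemma deriv_exp_smul (C : Matrix (Fin n) (Fin n) ℂ) (s : ℝ) :
    HasDerivAt (fun u : ℝ => NormedSpace.exp (u • C)) (NormedSpace.exp (s • C) * C) s := by
  exact hasDerivAt_exp_smul_const (𝕂 := ℝ) C s

lemma deriv_exp_one_sub_smul (C : Matrix (Fin n) (Fin n) ℂ) (s : ℝ) :
    HasDerivAt (fun u : ℝ => NormedSpace.exp ((1 - u) • C))
      (-(C * NormedSpace.exp ((1 - s) • C))) s := by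
  have h1 : HasDerivAt (fun u : ℝ => NormedSpace.exp (u • C))
      (C * NormedSpace.exp ((1 - s) • C)) (1 - s) := by
    exact hasDerivAt_exp_smul_const' (𝕂 := ℝ) C (1 - s)
  have h2 : HasDerivAt (fun u : ℝ => 1 - u) (-1 : ℝ) s := by
    simpa using (hasDerivAt_id s).const_sub 1
  have h3 := h1.scomp s h2
  rw [neg_one_smul] at h3
  exact h3

lemma cont_exp_smul (C : Matrix (Fin n) (Fin n) ℂ) :
    Continuous (fun s : ℝ => NormedSpace.exp (s • C)) :=
  NormedSpace.exp_continuous.comp (continuous_id.smul continuous_const)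

lemma key_identity (A B : Matrix (Fin n) (Fin n) ℂ) (t : ℝ) :
    NormedSpace.exp (A + t • B) - NormedSpace.exp A
      = t • ∫ s in (0:ℝ)..1,
          NormedSpace.exp (s • (A + t • B)) * B * NormedSpace.exp ((1 - s) • A) := by
  set C := A + t • B with hC
  have hg : ∀ s ∈ Set.uIcc (0:ℝ) 1,
      HasDerivAt (fun u : ℝ => NormedSpace.exp (u • C) * NormedSpace.exp ((1 - u) • A))
        (t • (NormedSpace.exp (s • C) * B * NormedSpace.exp ((1 - s) • A))) s := by
    intro s _
    have h := (deriv_exp_smul C s).mul (deriv_exp_one_sub_smul A s)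
    refine HasDerivAt.congr_deriv h ?_
    rw [hC]
    simp only [add_mul, mul_add, mul_neg, mul_assoc, smul_mul_assoc, mul_smul_comm]
    module
  have hint : @IntervalIntegrable _ PseudoMetricSpace.toUniformSpace.toTopologicalSpace _
      (fun s : ℝ => t • (NormedSpace.exp (s • C) * B * NormedSpace.exp ((1 - s) • A)))
      MeasureTheory.volume 0 1 := by
    apply Continuous.intervalIntegrable
    exact (((cont_exp_smul C).mul continuous_const).mul
      (NormedSpace.exp_continuous.comp ((continuous_const.sub continuous_id).smul
        continuous_const))).const_smul t
  have h := intervalIntegral.integral_eq_sub_of_hasDerivAt hg hint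
  rw [intervalIntegral.integral_smul] at h
  simp only [one_smul, zero_smul, sub_self, sub_zero, NormedSpace.exp_zero, mul_one, one_mul] at h
  exact h.symm

end DuhamelAux

/-- Duhamel's formula: for `n×n` complex matrices `A` and `B`, the function
`t ↦ exp(A + t·B)` is differentiable at `t = 0` with derivative
`∫₀¹ exp(λ·A)·B·exp((1−λ)·A) dλ` (a Bochner interval integral in the space of matrices). -/
theorem duhamel_formula {n : ℕ} (A B : Matrix (Fin n) (Fin n) ℂ) :
    HasDerivAt (fun t : ℝ => NormedSpace.exp (A + t • B))
      (∫ lam in (0:ℝ)..1,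
        NormedSpace.exp (lam • A) * B * NormedSpace.exp ((1 - lam) • A))
      0 := by
  classical
  set I : ℝ → Matrix (Fin n) (Fin n) ℂ := fun t =>
    ∫ s in (0:ℝ)..1,
      NormedSpace.exp (s • (A + t • B)) * B * NormedSpace.exp ((1 - s) • A) with hI
  have hIcont : Continuous I := by
    apply intervalIntegral.continuous_parametric_intervalIntegral_of_continuous'
    apply Continuous.mul
    · apply Continuous.mul
      · exact NormedSpace.exp_continuous.comp
          (continuous_snd.smul (continuous_const.add (continuous_fst.smul continuous_const)))
      · exact continuous_const
    · exact NormedSpace.exp_continuous.comp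
        ((continuous_const.sub continuous_snd).smul continuous_const)
  have hI0 : I 0 = ∫ lam in (0:ℝ)..1,
      NormedSpace.exp (lam • A) * B * NormedSpace.exp ((1 - lam) • A) := by
    simp [hI]
  refine hasDerivAt_iff_tendsto_slope.mpr ?_
  rw [← hI0]
  have heq : ∀ t ∈ ({(0:ℝ)}ᶜ : Set ℝ),
      I t = slope (fun t : ℝ => NormedSpace.exp (A + t • B)) 0 t := by
    intro t ht
    have ht' : (t : ℝ) ≠ 0 := ht
    simp only [slope, vsub_eq_sub, sub_zero, zero_smul, add_zero]
    rw [DuhamelAux.key_identity A B t, smul_smul, inv_mul_cancel₀ ht', one_smul]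
  exact Filter.Tendsto.congr'
    (Filter.eventuallyEq_of_mem self_mem_nhdsWithin heq)
    ((hIcont.tendsto 0).mono_left nhdsWithin_le_nhds)
end
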